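/- Generalized Fano inequality: Let W be a random variable taking values in {0,1}^k and let v ∈ {0,1}^k be a fixed vector such that E[d_H(W, v)] ≤ ε·k for some 0 ≤ ε ≤ 1/2, where d_H denotes Hamming distance. Then the Shannon entropy of W satisfies H(W) ≤ k · H₂(ε), where H₂(ε) = -ε log₂ ε - (1-ε) log₂(1-ε) is the binary entropy function. -/

import Mathlib

open Finset

variable {Ω : Type*} [Fintype Ω]

/-- Distribution of a random variable `X` with respect to probability weights `p`. -/
noncomputable def distOf {S : Type*} [DecidableEq S] (p : Ω → ℝ) (X : Ω → S) (s : S) : ℝ :=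
  ∑ ω, if X ω = s then p ω else 0

/-- Shannon entropy (in bits) of a distribution on a finite type,
with the convention `0 · log 0 = 0`. -/
noncomputable def H' {S : Type*} [Fintype S] (d : S → ℝ) : ℝ :=
  -∑ s, d s * Real.logb 2 (d s)

/-- Shannon entropy (in bits) of a random variable. -/
noncomputable def entropyOf {S : Type*} [Fintype S] [DecidableEq S]
    (p : Ω → ℝ) (X : Ω → S) : ℝ :=
  H' (distOf p X)

/-- Joint distribution of two random variables. -/
noncomputable def jointOf {S T : Type*} [DecidableEq S] [DecidableEq T]
    (p : Ω → ℝ) (X : Ω → S) (Y : Ω → T) (s : S) (t : T) : ℝ :=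
  ∑ ω, if X ω = s ∧ Y ω = t then p ω else 0

/-- Conditional entropy `H(X | Y) = E_{y ∼ Y}[H(X | Y = y)]`. -/
noncomputable def condEntropyOf {S T : Type*} [Fintype S] [Fintype T]
    [DecidableEq S] [DecidableEq T] (p : Ω → ℝ) (X : Ω → S) (Y : Ω → T) : ℝ :=
  ∑ t, distOf p Y t *
    H' (fun s => if distOf p Y t = 0 then 0 else jointOf p X Y s t / distOf p Y t)

/-- Mutual information `I(X; Y) = H(X) - H(X | Y)`. -/
noncomputable def mutualInfoOf {S T : Type*} [Fintype S] [Fintype T]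
    [DecidableEq S] [DecidableEq T] (p : Ω → ℝ) (X : Ω → S) (Y : Ω → T) : ℝ :=
  entropyOf p X - condEntropyOf p X Y

/-- The binary entropy function `H₂(x) = -x log₂ x - (1-x) log₂ (1-x)`,
with `H₂(0) = H₂(1) = 0`. -/
noncomputable def binEnt (x : ℝ) : ℝ :=
  -(x * Real.logb 2 x) - (1 - x) * Real.logb 2 (1 - x)

/-!
Compare the law of `W` with `q(x) = ε ^ d_H(x, v) * (1 - ε) ^ (k - d_H(x, v))`, the law of `v`
with each bit flipped independently with probability `ε`. Gibbs' inequality bounds `H(W)` by the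
cross-entropy `-E[log₂ q(W)] = k log₂ (1 / (1 - ε)) + E[d_H(W, v)] log₂ ((1 - ε) / ε)`, which is
increasing in `E[d_H(W, v)]` because `ε ≤ 1/2` and equals `k H₂(ε)` at `E[d_H(W, v)] = ε k`.
For `ε = 0` the law `q` is not positive, and the bound follows by letting `ε ↓ 0`.
-/

open Real Filter Topology

lemma mul_logb_sub_mul_logb_le {b d q : ℝ} (hb : 1 < b) (hd : 0 ≤ d) (hq : 0 < q) :
    d * logb b q - d * logb b d ≤ (q - d) / log b := by
  have hlogb : 0 < log b := log_pos hb
  rcases hd.eq_or_lt with rfl | hd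
  · simp only [zero_mul, sub_zero]
    positivity
  calc d * logb b q - d * logb b d = d * log (q / d) / log b := by
        rw [← mul_sub, ← logb_div hq.ne' hd.ne', logb, mul_div_assoc]
    _ ≤ d * (q / d - 1) / log b := by
        gcongr
        exact log_le_sub_one_of_pos (div_pos hq hd)
    _ = (q - d) / log b := by
        field_simp

theorem H'_le_neg_sum_mul_logb {S : Type*} [Fintype S] {d q : S → ℝ} (hd : ∀ s, 0 ≤ d s)
    (hd1 : ∑ s, d s = 1) (hq : ∀ s, 0 < q s) (hq1 : ∑ s, q s ≤ 1) :
    H' d ≤ -∑ s, d s * logb 2 (q s) := by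
  have hlog2 : 0 < log 2 := log_pos one_lt_two
  have key : ∑ s, (d s * logb 2 (q s) - d s * logb 2 (d s)) ≤ ∑ s, (q s - d s) / log 2 :=
    sum_le_sum fun s _ => mul_logb_sub_mul_logb_le one_lt_two (hd s) (hq s)
  rw [sum_sub_distrib, ← sum_div, sum_sub_distrib, hd1] at key
  have : (∑ s, q s - 1) / log 2 ≤ 0 := div_nonpos_of_nonpos_of_nonneg (by linarith) hlog2.le
  rw [H']
  linarith

section distOf

variable {S : Type*} [DecidableEq S] {p : Ω → ℝ}

theorem distOf_nonneg (hp : ∀ ω, 0 ≤ p ω) (X : Ω → S) (s : S) : 0 ≤ distOf p X s :=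
  sum_nonneg fun ω _ => by split_ifs <;> simp [hp ω]

variable [Fintype S]

theorem sum_distOf_mul (p : Ω → ℝ) (X : Ω → S) (g : S → ℝ) :
    ∑ s, distOf p X s * g s = ∑ ω, p ω * g (X ω) := by
  simp only [distOf, sum_mul, ite_mul, zero_mul]
  rw [sum_comm]
  simp

theorem sum_distOf (hsum : ∑ ω, p ω = 1) (X : Ω → S) : ∑ s, distOf p X s = 1 := by
  simpa [hsum] using sum_distOf_mul p X fun _ => 1

theorem entropyOf_le_neg_sum_mul_logb (hp : ∀ ω, 0 ≤ p ω) (hsum : ∑ ω, p ω = 1) (X : Ω → S)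
    {q : S → ℝ} (hq : ∀ s, 0 < q s) (hq1 : ∑ s, q s ≤ 1) :
    entropyOf p X ≤ -∑ ω, p ω * logb 2 (q (X ω)) := by
  rw [← sum_distOf_mul p X fun s => logb 2 (q s)]
  exact H'_le_neg_sum_mul_logb (distOf_nonneg hp X) (sum_distOf hsum X) hq hq1

end distOf

section bitFlipDist

variable {ι : Type*} [Fintype ι]

noncomputable def bitFlipDist (ε : ℝ) (v x : ι → Bool) : ℝ :=
  ε ^ hammingDist x v * (1 - ε) ^ (Fintype.card ι - hammingDist x v)

theorem bitFlipDist_eq_prod (ε : ℝ) (v x : ι → Bool) :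
    bitFlipDist ε v x = ∏ i, if x i = v i then 1 - ε else ε := by
  classical
  have hflip : #{i | ¬x i = v i} = hammingDist x v := rfl
  have hkeep : #{i | x i = v i} = Fintype.card ι - hammingDist x v := by
    have := card_filter_add_card_filter_not (s := univ) fun i => x i = v i
    rw [card_univ] at this
    omega
  rw [prod_ite, prod_const, prod_const, hkeep, ← hflip, mul_comm]
  rfl

theorem sum_bitFlipDist [DecidableEq ι] (ε : ℝ) (v : ι → Bool) : ∑ x, bitFlipDist ε v x = 1 := by
  have hcoord (i : ι) : ∑ b : Bool, (if b = v i then 1 - ε else ε) = 1 := by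
    cases v i <;> simp
  simp only [bitFlipDist_eq_prod]
  rw [← Fintype.prod_sum fun i b => if b = v i then 1 - ε else ε]
  simp only [hcoord, prod_const_one]

theorem bitFlipDist_pos {ε : ℝ} (hε0 : 0 < ε) (hε1 : ε < 1) (v x : ι → Bool) :
    0 < bitFlipDist ε v x := by
  have h1ε : 0 < 1 - ε := sub_pos.2 hε1
  unfold bitFlipDist
  positivity

theorem logb_bitFlipDist {b ε : ℝ} (hε0 : 0 < ε) (hε1 : ε < 1) (v x : ι → Bool) :
    logb b (bitFlipDist ε v x) = Fintype.card ι * logb b (1 - ε)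
      - hammingDist x v * (logb b (1 - ε) - logb b ε) := by
  have h1ε : 0 < 1 - ε := sub_pos.2 hε1
  rw [bitFlipDist, logb_mul (by positivity) (by positivity), logb_pow, logb_pow,
    Nat.cast_sub hammingDist_le_card_fintype]
  ring

end bitFlipDist

theorem binEnt_eq_binEntropy_div (x : ℝ) : binEnt x = binEntropy x / log 2 := by
  simp only [binEnt, binEntropy, logb, log_inv]
  ring

theorem continuous_binEnt : Continuous binEnt := by
  simp only [funext binEnt_eq_binEntropy_div]
  fun_prop

theorem entropyOf_le_mul_binEnt_of_pos {k : ℕ} {p : Ω → ℝ} (hp : ∀ ω, 0 ≤ p ω)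
    (hsum : ∑ ω, p ω = 1) (W : Ω → (Fin k → Bool)) (v : Fin k → Bool) {ε : ℝ} (hε0 : 0 < ε)
    (hεhalf : ε ≤ 1 / 2) (hdist : ∑ ω, p ω * (hammingDist (W ω) v : ℝ) ≤ ε * k) :
    entropyOf p W ≤ k * binEnt ε := by
  have hε1 : ε < 1 := by linarith
  have hslope : 0 ≤ logb 2 (1 - ε) - logb 2 ε :=
    sub_nonneg.2 (logb_le_logb_of_le one_lt_two hε0 (by linarith))
  calc entropyOf p W ≤ -∑ ω, p ω * logb 2 (bitFlipDist ε v (W ω)) :=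
        entropyOf_le_neg_sum_mul_logb hp hsum W (bitFlipDist_pos hε0 hε1 v)
          (sum_bitFlipDist ε v).le
    _ = (logb 2 (1 - ε) - logb 2 ε) * ∑ ω, p ω * (hammingDist (W ω) v : ℝ)
          - k * logb 2 (1 - ε) := by
        have hterm (ω : Ω) : p ω * logb 2 (bitFlipDist ε v (W ω)) = k * logb 2 (1 - ε) * p ω
            - (logb 2 (1 - ε) - logb 2 ε) * (p ω * hammingDist (W ω) v) := by
          rw [logb_bitFlipDist hε0 hε1, Fintype.card_fin]
          ring
        rw [sum_congr rfl fun ω _ => hterm ω, sum_sub_distrib, ← mul_sum, ← mul_sum, hsum]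
        ring
    _ ≤ (logb 2 (1 - ε) - logb 2 ε) * (ε * k) - k * logb 2 (1 - ε) := by
        gcongr
    _ = k * binEnt ε := by
        rw [binEnt]
        ring

/-- Generalized Fano inequality: if `E[d_H(W, v)] ≤ ε·k` with `0 ≤ ε ≤ 1/2`,
then `H(W) ≤ k · H₂(ε)`. -/
theorem stmt3 (k : ℕ) (p : Ω → ℝ) (hp : ∀ ω, 0 ≤ p ω) (hsum : ∑ ω, p ω = 1)
    (W : Ω → (Fin k → Bool)) (v : Fin k → Bool) (ε : ℝ)
    (hε0 : 0 ≤ ε) (hεhalf : ε ≤ 1 / 2)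
    (hdist : ∑ ω, p ω * (hammingDist (W ω) v : ℝ) ≤ ε * k) :
    entropyOf p W ≤ k * binEnt ε := by
  rcases hε0.eq_or_lt with rfl | hε
  · have hlim : Tendsto (fun e => (k : ℝ) * binEnt e) (𝓝[>] 0) (𝓝 (k * binEnt 0)) :=
      ((continuous_binEnt.tendsto 0).const_mul _).mono_left nhdsWithin_le_nhds
    refine ge_of_tendsto hlim ?_
    filter_upwards [Ioc_mem_nhdsGT one_half_pos] with e he
    refine entropyOf_le_mul_binEnt_of_pos hp hsum W v he.1 he.2 (hdist.trans ?_)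
    rw [zero_mul]
    exact mul_nonneg he.1.le k.cast_nonneg
  · exact entropyOf_le_mul_binEnt_of_pos hp hsum W v hε hεhalf hdist
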